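/- arXiv:1704.03176 — 2 statements merged into one kernel-verified Lean document; each statement's English description precedes it below -/
import Mathlib

section
/- Let f : {0,1}^n → {0,1} and F(x,y) = f(x ⊕ y). Then the ε-approximate monomial complexity of f is at least the ε-approximate rank of F: mon_ε(f) ≥ rank_ε(F). Similarly, the sign monomial complexity of f is at least the sign rank of F: signmon(f) ≥ signrank(F). -/
noncomputable def chi {n : ℕ} (S : Finset (Fin n)) (x : Fin n → Bool) : ℝ :=
  (-1 : ℝ) ^ (S.filter fun i => x i = true).card

noncomputable def fc {n : ℕ} (g : (Fin n → Bool) → ℝ) (S : Finset (Fin n)) : ℝ :=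
  (∑ x : Fin n → Bool, g x * chi S x) / 2 ^ n

noncomputable def mon {n : ℕ} (g : (Fin n → Bool) → ℝ) : ℕ :=
  Nat.card {S : Finset (Fin n) // fc g S ≠ 0}

/-- `ε`-approximate monomial complexity. -/
noncomputable def monEps {n : ℕ} (ε : ℝ) (f : (Fin n → Bool) → ℝ) : ℕ :=
  sInf {m | ∃ g : (Fin n → Bool) → ℝ, (∀ x, |g x - f x| ≤ ε) ∧ mon g = m}

/-- A real function `p` sign-represents the Boolean function `f`. -/
def signRep {n : ℕ} (p : (Fin n → Bool) → ℝ) (f : (Fin n → Bool) → Bool) : Prop :=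
  ∀ x, if f x then 0 < p x else p x < 0

/-- Sign monomial complexity. -/
noncomputable def signMon {n : ℕ} (f : (Fin n → Bool) → Bool) : ℕ :=
  sInf {m | ∃ p : (Fin n → Bool) → ℝ, signRep p f ∧ mon p = m}

/-- The XOR-matrix `F(x, y) = f(x ⊕ y)`. -/
def xorMatrixB {n : ℕ} (f : (Fin n → Bool) → Bool) :
    Matrix (Fin n → Bool) (Fin n → Bool) Bool :=
  fun x y => f (fun i => xor (x i) (y i))

/-- `ε`-approximate rank of a Boolean matrix. -/
noncomputable def rankEps {ι κ : Type*} [Fintype ι] [Fintype κ]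
    (ε : ℝ) (M : Matrix ι κ Bool) : ℕ :=
  sInf {r | ∃ M' : Matrix ι κ ℝ,
    (∀ i j, |M' i j - (if M i j then 1 else 0)| ≤ ε) ∧ M'.rank = r}

/-- Sign rank of a Boolean matrix. -/
noncomputable def signRank {ι κ : Type*} [Fintype ι] [Fintype κ]
    (M : Matrix ι κ Bool) : ℕ :=
  sInf {r | ∃ M' : Matrix ι κ ℝ,
    (∀ i j, if M i j then 0 < M' i j else M' i j < 0) ∧ M'.rank = r}

/-! By Fourier inversion and `χ_S (x ⊕ y) = χ_S x · χ_S y`, the matrix `g (x ⊕ y)` factors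
as `∑_S ĝ(S) χ_S χ_Sᵀ` over the `mon g` sets `S` with `ĝ(S) ≠ 0`, so its rank is at most
`mon g`. Approximation and sign-representation are entrywise conditions, so this XOR-lift turns
every witness for `f` into a witness for `F` of no larger rank. -/

open Finset

lemma Nat.sInf_le_sInf_of_forall_exists_le {A B : Set ℕ} (hne : B.Nonempty → A.Nonempty)
    (h : ∀ a ∈ A, ∃ b ∈ B, b ≤ a) : sInf B ≤ sInf A := by
  rcases A.eq_empty_or_nonempty with rfl | hA
  · rw [Set.not_nonempty_iff_eq_empty.mp fun hB => (hne hB).ne_empty rfl]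
  · obtain ⟨b, hb, hba⟩ := h _ (Nat.sInf_mem hA)
    exact (Nat.sInf_le hb).trans hba

section Fourier

variable {n : ℕ}

lemma chi_eq_prod (S : Finset (Fin n)) (x : Fin n → Bool) :
    chi S x = ∏ i ∈ S, if x i then (-1 : ℝ) else 1 := by
  rw [prod_ite, prod_const, prod_const, one_pow, mul_one, chi]

lemma chi_mul_chi (S : Finset (Fin n)) (x y : Fin n → Bool) :
    chi S x * chi S y = chi S fun i => xor (x i) (y i) := by
  simp only [chi_eq_prod, ← prod_mul_distrib]
  refine prod_congr rfl fun i _ => ?_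
  cases x i <;> cases y i <;> norm_num

lemma sum_chi (z : Fin n → Bool) :
    ∑ S, chi S z = if z = (fun _ => false) then (2 : ℝ) ^ n else 0 := by
  simp only [chi_eq_prod]
  rw [← powerset_univ, ← prod_one_add]
  split_ifs with hz
  · subst hz
    norm_num
  · obtain ⟨i, hi⟩ := Function.ne_iff.mp hz
    exact prod_eq_zero (mem_univ i) (by simp_all)

lemma sum_chi_mul_chi (x y : Fin n → Bool) :
    ∑ S, chi S x * chi S y = if x = y then (2 : ℝ) ^ n else 0 := by
  simp only [chi_mul_chi, sum_chi, funext_iff, bne_eq_false_iff_eq]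

lemma fourier_inversion (g : (Fin n → Bool) → ℝ) (y : Fin n → Bool) :
    ∑ S, fc g S * chi S y = g y := by
  calc ∑ S, fc g S * chi S y = (∑ x, g x * ∑ S, chi S x * chi S y) / 2 ^ n := by
        simp only [fc, div_mul_eq_mul_div, ← sum_div, sum_mul, mul_sum, mul_assoc]
        rw [sum_comm]
    _ = g y := by simp [sum_chi_mul_chi]

end Fourier

section XorMatrix

variable {n : ℕ}

def xorMatrix (g : (Fin n → Bool) → ℝ) : Matrix (Fin n → Bool) (Fin n → Bool) ℝ :=
  Matrix.of fun x y => g fun i => xor (x i) (y i)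

lemma rank_xorMatrix_le_mon (g : (Fin n → Bool) → ℝ) : (xorMatrix g).rank ≤ mon g := by
  classical
  let A : Matrix (Fin n → Bool) {S // fc g S ≠ 0} ℝ := Matrix.of fun x S => fc g S * chi S x
  let B : Matrix {S // fc g S ≠ 0} (Fin n → Bool) ℝ := Matrix.of fun S y => chi S y
  have hfactor : xorMatrix g = A * B := by
    ext x y
    rw [xorMatrix, Matrix.of_apply, ← fourier_inversion g, Matrix.mul_apply,
      ← sum_filter_of_ne fun S _ h => left_ne_zero_of_mul h,
      sum_subtype (p := fun S => fc g S ≠ 0) _ fun S => by simp]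
    refine sum_congr rfl fun S _ => ?_
    simp only [A, B, Matrix.of_apply, mul_assoc, chi_mul_chi]
  calc (xorMatrix g).rank = (A * B).rank := by rw [hfactor]
    _ ≤ A.rank := Matrix.rank_mul_le_left A B
    _ ≤ Fintype.card {S // fc g S ≠ 0} := Matrix.rank_le_card_width A
    _ = mon g := Nat.card_eq_fintype_card.symm

lemma sInf_rank_le_sInf_mon (f : (Fin n → Bool) → Bool) (R : Bool → ℝ → Prop) :
    sInf {r | ∃ M : Matrix (Fin n → Bool) (Fin n → Bool) ℝ,
        (∀ x y, R (xorMatrixB f x y) (M x y)) ∧ M.rank = r} ≤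
      sInf {m | ∃ g : (Fin n → Bool) → ℝ, (∀ x, R (f x) (g x)) ∧ mon g = m} := by
  apply Nat.sInf_le_sInf_of_forall_exists_le
  -- `sInf ∅ = 0`, so the case without witnesses for `f` needs the column `y = 0` of a
  -- witness for `F`.
  · rintro ⟨_, M, hM, -⟩
    refine ⟨_, fun x => M x fun _ => false, fun x => ?_, rfl⟩
    simpa [xorMatrixB] using hM x fun _ => false
  · rintro _ ⟨g, hg, rfl⟩
    exact ⟨_, ⟨xorMatrix g, fun x y => hg _, rfl⟩, rank_xorMatrix_le_mon g⟩

end XorMatrix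

theorem monEps_ge_rankEps_and_signMon_ge_signRank {n : ℕ}
    (f : (Fin n → Bool) → Bool) (ε : ℝ) :
    monEps ε (fun x => if f x then (1 : ℝ) else 0) ≥ rankEps ε (xorMatrixB f) ∧
    signMon f ≥ signRank (xorMatrixB f) :=
  ⟨sInf_rank_le_sInf_mon f fun b t => |t - if b then 1 else 0| ≤ ε,
    sInf_rank_le_sInf_mon f fun b t => if b then 0 < t else t < 0⟩
end

section
/- Let f : {0,1}^n → {0,1} be symmetric and let ρ(f) = |{i ∈ {0,...,n−2} : f(i) ≠ f(i+2)}| (where f(i) denotes the common value on weight-i inputs). Then signmon(f) ≤ (n+2)^{ρ(f)}, where signmon is the sign monomial complexity. -/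
def wt {n : ℕ} (x : Fin n → Bool) : ℕ :=
  (Finset.univ.filter fun i => x i = true).card

/-!
Write `k` for the Hamming weight `|x|`. Going from weight `k` to `k + 2`, the value of `g`
changes exactly at the indices `t ∈ flips n g`, so the sign `±1` of `g k` is that of
`g (k % 2)` times one factor `-1` for every such `t` with `t + 2 ≤ k` and `t ≡ k [MOD 2]`.
The parity part is a single character `±χ_∅` or `±χ_univ`, and each flip is the sign pattern
of `stepPoly n t`, a combination of `χ_∅`, `χ_univ` and the `n` characters `χ_{i}`.
The product of these polynomials sign-represents `f`, and as `χ_S χ_T = χ_(S ∆ T)` its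
Fourier support has at most `(n + 2) ^ #(flips n g)` elements.
-/

open Finset

section Fourier

variable {n : ℕ}

lemma chi_eq_prod_univ (S : Finset (Fin n)) (x : Fin n → Bool) :
    chi S x = ∏ i, if i ∈ S then (if x i then (-1 : ℝ) else 1) else 1 := by
  rw [chi_eq_prod, Fintype.prod_ite_mem]

lemma chi_empty : chi (∅ : Finset (Fin n)) = 1 := by
  funext x
  simp [chi]

lemma chi_univ_apply (x : Fin n → Bool) : chi univ x = (-1 : ℝ) ^ wt x := rfl

lemma chi_singleton_apply (i : Fin n) (x : Fin n → Bool) :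
    chi {i} x = if x i then (-1 : ℝ) else 1 := by
  rw [chi_eq_prod, prod_singleton]

lemma chi_mul_chi_s17 (S T : Finset (Fin n)) : chi S * chi T = chi (symmDiff S T) := by
  funext x
  rw [Pi.mul_apply, chi_eq_prod_univ, chi_eq_prod_univ, chi_eq_prod_univ, ← prod_mul_distrib]
  refine prod_congr rfl fun i _ => ?_
  by_cases hS : i ∈ S <;> by_cases hT : i ∈ T <;> cases x i <;>
    simp [mem_symmDiff, hS, hT]

lemma sum_chi_eq_zero {U : Finset (Fin n)} (hU : U.Nonempty) : ∑ x, chi U x = 0 := by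
  obtain ⟨i, hi⟩ := hU
  simp_rw [chi_eq_prod_univ]
  rw [← Fintype.prod_sum fun i (b : Bool) => if i ∈ U then (if b then (-1 : ℝ) else 1) else 1]
  refine prod_eq_zero (mem_univ i) ?_
  simp [hi]

lemma fc_chi_of_ne {S T : Finset (Fin n)} (h : S ≠ T) : fc (chi S) T = 0 := by
  have hST : (symmDiff S T).Nonempty := nonempty_iff_ne_empty.2 (symmDiff_eq_bot.not.2 h)
  simp only [fc, ← Pi.mul_apply (chi S), chi_mul_chi_s17, sum_chi_eq_zero hST, zero_div]

lemma wt_le (x : Fin n → Bool) : wt x ≤ n :=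
  (card_filter_le _ _).trans_eq (card_fin n)

lemma wt_eq_sum_chi_singleton (x : Fin n → Bool) :
    (wt x : ℝ) = ∑ i, (1 - chi {i} x) / 2 := by
  rw [wt, card_filter, Nat.cast_sum]
  refine sum_congr rfl fun i _ => ?_
  cases hx : x i <;> norm_num [chi_singleton_apply, hx]

def fourierSpan (A : Finset (Finset (Fin n))) : Submodule ℝ ((Fin n → Bool) → ℝ) :=
  Submodule.span ℝ (chi '' A)

lemma chi_mem_fourierSpan {A : Finset (Finset (Fin n))} {S : Finset (Fin n)} (hS : S ∈ A) :
    chi S ∈ fourierSpan A :=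
  Submodule.subset_span (Set.mem_image_of_mem _ hS)

lemma fc_eq_zero_of_mem_fourierSpan {A : Finset (Finset (Fin n))} {p : (Fin n → Bool) → ℝ}
    (hp : p ∈ fourierSpan A) {T : Finset (Fin n)} (hT : T ∉ A) : fc p T = 0 := by
  induction hp using Submodule.span_induction with
  | mem _ h =>
    obtain ⟨S, hS, rfl⟩ := h
    exact fc_chi_of_ne fun h => hT (h ▸ hS)
  | zero => simp [fc]
  | add p q _ _ hp hq =>
    simp only [fc, Pi.add_apply, add_mul, sum_add_distrib, add_div] at hp hq ⊢
    rw [hp, hq, add_zero]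
  | smul c p _ hp =>
    simp only [fc, Pi.smul_apply, smul_eq_mul, mul_assoc, ← mul_sum, mul_div_assoc] at hp ⊢
    rw [hp, mul_zero]

lemma mon_le_card_of_mem_fourierSpan {A : Finset (Finset (Fin n))} {p : (Fin n → Bool) → ℝ}
    (hp : p ∈ fourierSpan A) : mon p ≤ #A := by
  rw [mon, Nat.card_eq_fintype_card, Fintype.card_subtype]
  exact card_le_card fun T hT => by
    by_contra h
    exact (mem_filter.1 hT).2 (fc_eq_zero_of_mem_fourierSpan hp h)

lemma mul_mem_fourierSpan {A B : Finset (Finset (Fin n))} {p q : (Fin n → Bool) → ℝ}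
    (hp : p ∈ fourierSpan A) (hq : q ∈ fourierSpan B) :
    p * q ∈ fourierSpan (image₂ symmDiff A B) := by
  have hpq := Submodule.mul_mem_mul hp hq
  rw [fourierSpan, fourierSpan, Submodule.span_mul_span] at hpq
  refine Submodule.span_mono ?_ hpq
  rintro _ ⟨_, ⟨S, hS, rfl⟩, _, ⟨T, hT, rfl⟩, rfl⟩
  exact ⟨symmDiff S T, mem_image₂_of_mem hS hT, (chi_mul_chi_s17 S T).symm⟩

lemma prod_mem_fourierSpan {ι : Type*} (C : Finset ι) (q : ι → (Fin n → Bool) → ℝ)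
    (B : Finset (Finset (Fin n))) (hq : ∀ t ∈ C, q t ∈ fourierSpan B) :
    ∃ A : Finset (Finset (Fin n)), #A ≤ #B ^ #C ∧ ∏ t ∈ C, q t ∈ fourierSpan A := by
  induction C using cons_induction with
  | empty =>
    refine ⟨{∅}, by simp, ?_⟩
    simpa [← chi_empty] using chi_mem_fourierSpan (mem_singleton_self _)
  | cons a s ha ih =>
    obtain ⟨A, hcard, hA⟩ := ih fun t ht => hq t (mem_cons_of_mem ht)
    refine ⟨image₂ symmDiff B A, ?_, ?_⟩
    · calc #(image₂ symmDiff B A) ≤ #B * #A := card_image₂_le _ _ _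
        _ ≤ #B * #B ^ #s := Nat.mul_le_mul_left _ hcard
        _ = #B ^ #(cons a s ha) := by rw [card_cons, pow_succ']
    · rw [prod_cons]
      exact mul_mem_fourierSpan (hq a (mem_cons_self a s)) hA

end Fourier

def boolSign (b : Bool) : ℝ := if b then 1 else -1

lemma boolSign_mul_self (b : Bool) : boolSign b * boolSign b = 1 := by
  cases b <;> norm_num [boolSign]

lemma signRep_of_pos_mul {n : ℕ} {p : (Fin n → Bool) → ℝ} {f : (Fin n → Bool) → Bool}
    (h : ∀ x, 0 < boolSign (f x) * p x) : signRep p f := by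
  intro x
  have hx := h x
  unfold boolSign at hx
  split_ifs at hx ⊢ <;> linarith

def flips (n : ℕ) (g : ℕ → Bool) : Finset ℕ :=
  (range (n - 1)).filter fun i => g i ≠ g (i + 2)

def stepSign (t k : ℕ) : ℝ := if t + 2 ≤ k ∧ k % 2 = t % 2 then -1 else 1

lemma stepSign_add_two (t k : ℕ) :
    stepSign t (k + 2) = (if t = k then -1 else 1) * stepSign t k := by
  unfold stepSign
  split_ifs <;> (try norm_num) <;> omega

lemma boolSign_eq_mul_prod_stepSign {n : ℕ} (g : ℕ → Bool) {k : ℕ} (hk : k ≤ n) :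
    boolSign (g k) = boolSign (g (k % 2)) * ∏ t ∈ flips n g, stepSign t k := by
  induction k using Nat.twoStepInduction with
  | zero => simp [stepSign]
  | one => simp [stepSign]
  | more k ih _ =>
    have hk_mem : k ∈ flips n g ↔ g k ≠ g (k + 2) := by
      rw [flips, mem_filter, mem_range]
      exact and_iff_right (by omega)
    simp_rw [stepSign_add_two, prod_mul_distrib, prod_ite_eq', hk_mem, Nat.add_mod_right]
    rw [mul_left_comm, ← ih (by omega)]
    split_ifs with h
    · cases hg : g k <;> cases hg' : g (k + 2) <;> simp_all [boolSign]
    · rw [not_not.1 h, one_mul]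

/-- Equal to `t + 1 - |x|` when `|x| ≡ t [MOD 2]` and to `n + t + 2 - |x|` otherwise, so its sign
at `x` is `stepSign t |x|`. -/
noncomputable def stepPoly (n t : ℕ) : (Fin n → Bool) → ℝ :=
  fun x => t + 1 - wt x + (n + 1) / 2 * (1 - (-1) ^ t * chi univ x)

lemma stepSign_mul_stepPoly_pos {n : ℕ} (t : ℕ) (x : Fin n → Bool) :
    0 < stepSign t (wt x) * stepPoly n t x := by
  have hw : (wt x : ℝ) ≤ n := by exact_mod_cast wt_le x
  rw [stepPoly, chi_univ_apply, ← pow_add, stepSign]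
  by_cases hpar : wt x % 2 = t % 2
  · rw [Even.neg_one_pow (Nat.even_add.2 (by simp [Nat.even_iff, hpar]))]
    by_cases hle : t + 2 ≤ wt x
    · rw [if_pos ⟨hle, hpar⟩]
      have : (t : ℝ) + 2 ≤ wt x := by exact_mod_cast hle
      linarith
    · rw [if_neg fun h => hle h.1]
      have : (wt x : ℝ) ≤ t := by exact_mod_cast (show wt x ≤ t by omega)
      linarith
  · rw [Odd.neg_one_pow (Nat.odd_add.2 (by simp [Nat.odd_iff, Nat.even_iff]; omega)),
      if_neg fun h => hpar h.2]
    have : (0 : ℝ) ≤ t := t.cast_nonneg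
    linarith

def stepSupport (n : ℕ) : Finset (Finset (Fin n)) :=
  insert ∅ (insert univ (univ.image fun i => {i}))

lemma card_stepSupport_le (n : ℕ) : #(stepSupport n) ≤ n + 2 := by
  have hsingle : #(univ.image fun i : Fin n => ({i} : Finset (Fin n))) = n := by
    rw [card_image_of_injective _ singleton_injective, card_fin]
  calc #(stepSupport n) ≤ #(univ.image fun i : Fin n => ({i} : Finset (Fin n))) + 1 + 1 :=
        (card_insert_le _ _).trans (Nat.add_le_add_right (card_insert_le _ _) 1)
    _ = n + 2 := by rw [hsingle]

lemma stepPoly_mem_fourierSpan (n t : ℕ) : stepPoly n t ∈ fourierSpan (stepSupport n) := by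
  have hS : ∀ i, chi {i} ∈ fourierSpan (stepSupport n) := fun i =>
    chi_mem_fourierSpan (mem_insert_of_mem (mem_insert_of_mem (mem_image_of_mem _ (mem_univ i))))
  have hu : chi univ ∈ fourierSpan (stepSupport n) :=
    chi_mem_fourierSpan (mem_insert_of_mem (mem_insert_self _ _))
  have he : chi ∅ ∈ fourierSpan (stepSupport n) := chi_mem_fourierSpan (mem_insert_self _ _)
  have hrepr : stepPoly n t = (t + 3 / 2 : ℝ) • chi ∅
      + ∑ i, (1 / 2 : ℝ) • chi {i} - ((n + 1) / 2 * (-1) ^ t : ℝ) • chi univ := by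
    funext x
    simp only [stepPoly, wt_eq_sum_chi_singleton, chi_empty, Pi.add_apply, Pi.sub_apply,
      Pi.smul_apply, Finset.sum_apply, smul_eq_mul, Pi.one_apply, ← sum_div, sum_sub_distrib,
      sum_const, card_univ, Fintype.card_fin, nsmul_eq_mul, ← mul_sum]
    ring
  rw [hrepr]
  exact sub_mem (add_mem (Submodule.smul_mem _ _ he)
    (sum_mem fun i _ => Submodule.smul_mem _ _ (hS i))) (Submodule.smul_mem _ _ hu)

noncomputable def basePoly (n : ℕ) (g : ℕ → Bool) : (Fin n → Bool) → ℝ :=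
  boolSign (g 0) • chi (if g 0 = g 1 then ∅ else univ)

lemma basePoly_apply {n : ℕ} (g : ℕ → Bool) (x : Fin n → Bool) :
    basePoly n g x = boolSign (g (wt x % 2)) := by
  rw [basePoly, Pi.smul_apply, smul_eq_mul]
  split_ifs with h
  · rw [chi_empty, Pi.one_apply, mul_one]
    rcases Nat.mod_two_eq_zero_or_one (wt x) with hw | hw <;> rw [hw, h]
  · rw [chi_univ_apply]
    rcases Nat.even_or_odd (wt x) with hw | hw
    · rw [hw.neg_one_pow, Nat.even_iff.1 hw, mul_one]
    · rw [hw.neg_one_pow, Nat.odd_iff.1 hw]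
      cases h0 : g 0 <;> cases h1 : g 1 <;> simp_all [boolSign]

noncomputable def signPoly (n : ℕ) (g : ℕ → Bool) : (Fin n → Bool) → ℝ :=
  basePoly n g * ∏ t ∈ flips n g, stepPoly n t

lemma signRep_signPoly {n : ℕ} {g : ℕ → Bool} {f : (Fin n → Bool) → Bool}
    (hf : ∀ x, f x = g (wt x)) : signRep (signPoly n g) f := by
  refine signRep_of_pos_mul fun x => ?_
  rw [hf, boolSign_eq_mul_prod_stepSign g (wt_le x), signPoly, Pi.mul_apply, basePoly_apply,
    prod_apply]
  have hsplit : (boolSign (g (wt x % 2)) * ∏ t ∈ flips n g, stepSign t (wt x)) *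
        (boolSign (g (wt x % 2)) * ∏ t ∈ flips n g, stepPoly n t x) =
      boolSign (g (wt x % 2)) * boolSign (g (wt x % 2)) *
        ∏ t ∈ flips n g, stepSign t (wt x) * stepPoly n t x := by
    rw [prod_mul_distrib]
    ring
  rw [hsplit, boolSign_mul_self, one_mul]
  exact prod_pos fun t _ => stepSign_mul_stepPoly_pos t x

lemma exists_card_le_signPoly_mem_fourierSpan (n : ℕ) (g : ℕ → Bool) :
    ∃ A : Finset (Finset (Fin n)),
      #A ≤ (n + 2) ^ #(flips n g) ∧ signPoly n g ∈ fourierSpan A := by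
  obtain ⟨A, hcard, hA⟩ :=
    prod_mem_fourierSpan (flips n g) (stepPoly n) _ fun t _ => stepPoly_mem_fourierSpan n t
  have hbase : basePoly n g ∈ fourierSpan {if g 0 = g 1 then ∅ else univ} :=
    Submodule.smul_mem _ _ (chi_mem_fourierSpan (mem_singleton_self _))
  refine ⟨_, ?_, mul_mem_fourierSpan hbase hA⟩
  calc #(image₂ symmDiff {if g 0 = g 1 then ∅ else univ} A) ≤ 1 * #A := card_image₂_le _ _ _
    _ ≤ #(stepSupport n) ^ #(flips n g) := by rw [one_mul]; exact hcard
    _ ≤ (n + 2) ^ #(flips n g) := Nat.pow_le_pow_left (card_stepSupport_le n) _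

theorem signMon_le_of_symmetric {n : ℕ} (g : ℕ → Bool)
    (f : (Fin n → Bool) → Bool) (hf : ∀ x, f x = g (wt x)) :
    signMon f ≤ (n + 2) ^ ((Finset.range (n - 1)).filter fun i => g i ≠ g (i + 2)).card := by
  obtain ⟨A, hcard, hA⟩ := exists_card_le_signPoly_mem_fourierSpan n g
  calc signMon f ≤ mon (signPoly n g) := Nat.sInf_le ⟨_, signRep_signPoly hf, rfl⟩
    _ ≤ #A := mon_le_card_of_mem_fourierSpan hA
    _ ≤ _ := hcard
end
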